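/- Assume σ < 1/4 and (1/4 − σ)hₜ²α² ≤ 1, where α > 0 satisfies ⟨Aw, w⟩ ≤ α²⟨Bw, w⟩ for all w ∈ H (the borderline case ε₀ = 0). Then the solution v of the three-level method satisfies, for every m with 1 ≤ m ≤ M, (‖δ̄ₜv^m‖_B² + (σ − 1/4)hₜ²‖δ̄ₜv^m‖_A² + ‖s̄ₜv^m‖_A²)^{1/2} ≤ (‖v⁰‖_A² + ⟨(B + σhₜ²A)⁻¹u₁, u₁⟩)^{1/2} + 2hₜ Σ_{l=1}^{M−1} ⟨A⁻¹(δ̄ₜf)^l, (δ̄ₜf)^l⟩^{1/2} + 3 max_{0 ≤ m ≤ M−1} ⟨A⁻¹f^m, f^m⟩^{1/2}. -/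

import Mathlib

/-!
Write `E^m = ‖δ̄ₜv^m‖_B² + (σ - 1/4)hₜ²‖δ̄ₜv^m‖_A² + ‖s̄ₜv^m‖_A²`. Pairing the scheme at level `m`
with `s̄ₜv^{m+1} - s̄ₜv^m = (v^{m+1} - v^{m-1})/2` gives the energy identity
`E^{m+1} - E^m = 2⟨f^m, s̄ₜv^{m+1} - s̄ₜv^m⟩`. The hypothesis on `α` means `B ≥ (1/4 - σ)hₜ²A`,
so `E^m ≥ ‖s̄ₜv^m‖_A²` and every pairing `⟨g, s̄ₜv^l⟩` is at most `‖g‖_{A⁻¹} √E^l`. Summing by parts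
moves the time differences onto `f`, and a discrete Gronwall argument for `√E^m` then yields the
bound, once `E^1` is controlled: the initial condition gives
`E^1 ≤ ‖v⁰‖_A² + ‖u₁ + hₜf⁰/2‖²_{(B + σhₜ²A)⁻¹}`, and `B + σhₜ²A ≥ hₜ²A/4` bounds the `f⁰` part
by `‖f⁰‖_{A⁻¹}`.
-/

open scoped RealInnerProductSpace
open Finset

section

variable {H : Type*} [NormedAddCommGroup H] [InnerProductSpace ℝ H]

namespace LinearMap.IsPositive

variable {P Q : H →ₗ[ℝ] H}

theorem inner_le_sqrt_mul_sqrt (hP : P.IsPositive) (x y : H) :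
    ⟪P x, y⟫ ≤ √⟪P x, x⟫ * √⟪P y, y⟫ := by
  have hcs := LinearMap.BilinForm.apply_mul_apply_le_of_forall_zero_le ((innerₗ H).comp P)
    hP.inner_nonneg_left x y
  simp only [LinearMap.comp_apply, innerₗ_apply_apply] at hcs
  rw [hP.isSymmetric y x, real_inner_comm (P x) y] at hcs
  rw [← Real.sqrt_mul (hP.inner_nonneg_left x)]
  exact (le_abs_self _).trans (Real.abs_le_sqrt (by rw [sq]; exact hcs))

theorem sqrt_inner_add_le (hP : P.IsPositive) (x y : H) :
    √⟪P (x + y), x + y⟫ ≤ √⟪P x, x⟫ + √⟪P y, y⟫ := by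
  have hxy : ⟪P (x + y), x + y⟫ = ⟪P x, x⟫ + 2 * ⟪P x, y⟫ + ⟪P y, y⟫ := by
    rw [map_add, inner_add_left, inner_add_right, inner_add_right, hP.isSymmetric y x,
      real_inner_comm (P x) y]
    ring
  rw [Real.sqrt_le_left (by positivity), hxy, add_sq, Real.sq_sqrt (hP.inner_nonneg_left x),
    Real.sq_sqrt (hP.inner_nonneg_left y)]
  linarith [hP.inner_le_sqrt_mul_sqrt x y]

theorem of_rightInverse (hP : P.IsPositive) (hQ : Function.RightInverse Q P) : Q.IsPositive := by
  have hQP : ∀ x, ⟪Q x, x⟫ = ⟪P (Q x), Q x⟫ := fun x => by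
    rw [← real_inner_comm (P (Q x)) (Q x), hQ x]
  refine (LinearMap.isPositive_iff Q).mpr ⟨fun x y => ?_, fun x => hQP x ▸ hP.inner_nonneg_left _⟩
  conv_lhs => rw [← hQ y]
  rw [← hP.isSymmetric, hQ]

theorem abs_inner_le_of_rightInverse (hP : P.IsPositive) (hQ : Function.RightInverse Q P)
    (x y : H) : |⟪x, y⟫| ≤ √⟪Q x, x⟫ * √⟪P y, y⟫ := by
  have key : ∀ z, ⟪z, y⟫ ≤ √⟪Q z, z⟫ * √⟪P y, y⟫ := fun z => by
    have h := hP.inner_le_sqrt_mul_sqrt (Q z) y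
    rwa [hQ z, real_inner_comm (Q z) z] at h
  refine abs_le'.mpr ⟨key x, ?_⟩
  simpa only [map_neg, inner_neg_left, inner_neg_right, neg_neg] using key (-x)

theorem mul_inner_le_of_rightInverse {C Ci : H →ₗ[ℝ] H} (hP : P.IsPositive)
    (hQ : Function.RightInverse Q P) (hCi : Function.RightInverse Ci C) {c : ℝ} (hc : 0 ≤ c)
    (hPC : ∀ y, c * ⟪P y, y⟫ ≤ ⟪C y, y⟫) (x : H) : c * ⟪Ci x, x⟫ ≤ ⟪Q x, x⟫ := by
  set y := Ci x
  have hyx : ⟪y, x⟫ = ⟪C y, y⟫ := by rw [hCi x, real_inner_comm]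
  have hPy := hP.inner_nonneg_left y
  have hQx : 0 ≤ ⟪Q x, x⟫ := (hP.of_rightInverse hQ).inner_nonneg_left x
  have ht : 0 ≤ ⟪y, x⟫ := hyx ▸ (mul_nonneg hc hPy).trans (hPC y)
  have hsq : ⟪y, x⟫ ^ 2 ≤ ⟪Q x, x⟫ * ⟪P y, y⟫ := by
    have h := (le_abs_self _).trans (hP.abs_inner_le_of_rightInverse hQ x y)
    rw [real_inner_comm] at h
    calc ⟪y, x⟫ ^ 2 ≤ (√⟪Q x, x⟫ * √⟪P y, y⟫) ^ 2 := pow_le_pow_left₀ ht h 2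
      _ = ⟪Q x, x⟫ * ⟪P y, y⟫ := by rw [mul_pow, Real.sq_sqrt hQx, Real.sq_sqrt hPy]
  rcases ht.eq_or_lt with h0 | hpos
  · rw [← h0, mul_zero]; exact hQx
  · refine le_of_mul_le_mul_right ?_ hpos
    nlinarith [hPC y]

end LinearMap.IsPositive

theorem LinearMap.isPositive_of_inner_pos {P : H →ₗ[ℝ] H} (hsym : P.IsSymmetric)
    (hpos : ∀ x, x ≠ 0 → 0 < ⟪P x, x⟫) : P.IsPositive := by
  refine (LinearMap.isPositive_iff P).mpr ⟨hsym, fun x => ?_⟩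
  rcases eq_or_ne x 0 with rfl | hx
  · simp
  · exact (hpos x hx).le

theorem eq_add_sub_sum_inner_of_sub_eq {E : ℕ → ℝ} {f s : ℕ → H} {m : ℕ} (hm : 2 ≤ m)
    (hdiff : ∀ l, 1 ≤ l → l < m → E (l + 1) - E l = 2 * ⟪f l, s (l + 1) - s l⟫) :
    E m = E 1 + 2 * ⟪f (m - 1), s m⟫ - 2 * ⟪f 1, s 1⟫
      - 2 * ∑ l ∈ Ioo 1 m, ⟪f l - f (l - 1), s l⟫ := by
  induction m, hm using Nat.le_induction with
  | base =>
    have := hdiff 1 le_rfl one_lt_two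
    simp only [Nat.reduceSub, Nat.reduceAdd, inner_sub_right] at this ⊢
    rw [show Ioo 1 2 = (∅ : Finset ℕ) by rfl, sum_empty]
    linarith
  | succ m hm ih =>
    have hstep := hdiff m (by omega) (by omega)
    have hprev := ih fun l hl1 hlm => hdiff l hl1 (by omega)
    rw [Ioo_add_one_right_eq_Ioc, ← Ioo_insert_right (by omega), sum_insert (by simp),
      Nat.add_sub_cancel, inner_sub_left]
    rw [inner_sub_right] at hstep
    linarith

theorem le_add_add_two_mul_sum_of_sq_le {x g : ℕ → ℝ} {a b : ℝ} {n₀ N : ℕ}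
    (ha : 0 ≤ a) (hba : b ≤ a) (hg : ∀ l, 0 ≤ g l)
    (hx : ∀ m, n₀ ≤ m → m ≤ N → (x m - b) ^ 2 ≤ a ^ 2 + 2 * ∑ l ∈ Ioo n₀ m, g l * x l) :
    ∀ m, n₀ ≤ m → m ≤ N → x m ≤ a + b + 2 * ∑ l ∈ Ioo n₀ m, g l := by
  intro m
  induction m using Nat.strong_induction_on with
  | _ m ih =>
    intro hm hmN
    set S := ∑ l ∈ Ioo n₀ m, g l
    have hS : 0 ≤ S := sum_nonneg fun l _ => hg l
    have hxl : ∀ l ∈ Ioo n₀ m, x l ≤ a + b + 2 * S := by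
      intro l hl
      obtain ⟨hl₀, hlm⟩ := mem_Ioo.mp hl
      have hSl : ∑ i ∈ Ioo n₀ l, g i ≤ S :=
        sum_le_sum_of_subset_of_nonneg (Ioo_subset_Ioo_right hlm.le) fun i _ _ => hg i
      linarith [ih l hlm hl₀.le (by omega)]
    have hsum : ∑ l ∈ Ioo n₀ m, g l * x l ≤ S * (a + b + 2 * S) := by
      rw [sum_mul]
      exact sum_le_sum fun l hl => mul_le_mul_of_nonneg_left (hxl l hl) (hg l)
    have hsq : (x m - b) ^ 2 ≤ (a + 2 * S) ^ 2 := by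
      nlinarith [hx m hm hmN, mul_nonneg hS (sub_nonneg.mpr hba)]
    linarith [(abs_le_of_sq_le_sq' hsq (by positivity)).2]

noncomputable section ThreeLevel

variable (B A : H →ₗ[ℝ] H) (σ h : ℝ) (v : ℕ → H)

-- `backwardDiff h v m`, `levelMean v m` and `threeLevelOperator B A σ h v m` are `δ̄ₜv^m`,
-- `s̄ₜv^m` and `(B + σhₜ²A)Λₜv^m + Av^m`.
def backwardDiff (m : ℕ) : H := h⁻¹ • (v m - v (m - 1))

def levelMean (m : ℕ) : H := (1/2 : ℝ) • (v (m - 1) + v m)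

def threeLevelEnergy (m : ℕ) : ℝ :=
  ⟪B (backwardDiff h v m), backwardDiff h v m⟫
    + (σ - 1/4) * h^2 * ⟪A (backwardDiff h v m), backwardDiff h v m⟫
    + ⟪A (levelMean v m), levelMean v m⟫

def threeLevelOperator (m : ℕ) : H :=
  B ((h^2)⁻¹ • (v (m+1) - (2:ℝ) • v m + v (m-1)))
    + (σ * h^2) • A ((h^2)⁻¹ • (v (m+1) - (2:ℝ) • v m + v (m-1))) + A (v m)

variable {B A σ h v}

theorem threeLevelEnergy_succ_sub (hB : B.IsSymmetric) (hA : A.IsSymmetric) (hh : h ≠ 0)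
    (m : ℕ) :
    threeLevelEnergy B A σ h v (m + 1) - threeLevelEnergy B A σ h v m
      = 2 * ⟪threeLevelOperator B A σ h v m, levelMean v (m + 1) - levelMean v m⟫ := by
  have hB' : ∀ x y, ⟪B x, y⟫ = ⟪B y, x⟫ := fun x y => by rw [hB, real_inner_comm]
  have hA' : ∀ x y, ⟪A x, y⟫ = ⟪A y, x⟫ := fun x y => by rw [hA, real_inner_comm]
  simp only [threeLevelEnergy, threeLevelOperator, backwardDiff, levelMean, Nat.add_sub_cancel,
    map_add, map_sub, map_smul, inner_add_left, inner_add_right, inner_sub_left, inner_sub_right,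
    real_inner_smul_left, real_inner_smul_right]
  rw [hB' (v m) (v (m - 1)), hB' (v (m + 1)) (v (m - 1)), hB' (v (m + 1)) (v m),
    hA' (v m) (v (m - 1)), hA' (v (m + 1)) (v (m - 1)), hA' (v (m + 1)) (v m)]
  field_simp
  ring

theorem threeLevelEnergy_nonneg (hA : A.IsPositive)
    (hBA : ∀ w, (1/4 - σ) * h^2 * ⟪A w, w⟫ ≤ ⟪B w, w⟫) (m : ℕ) :
    0 ≤ threeLevelEnergy B A σ h v m := by
  unfold threeLevelEnergy
  linarith [hBA (backwardDiff h v m), hA.inner_nonneg_left (levelMean v m)]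

theorem abs_inner_levelMean_le {Ai : H →ₗ[ℝ] H} (hA : A.IsPositive)
    (hAi : Function.RightInverse Ai A) (hBA : ∀ w, (1/4 - σ) * h^2 * ⟪A w, w⟫ ≤ ⟪B w, w⟫)
    (x : H) (m : ℕ) :
    |⟪x, levelMean v m⟫| ≤ √⟪Ai x, x⟫ * √(threeLevelEnergy B A σ h v m) := by
  refine (hA.abs_inner_le_of_rightInverse hAi _ _).trans
    (mul_le_mul_of_nonneg_left (Real.sqrt_le_sqrt ?_) (Real.sqrt_nonneg _))
  have := hBA (backwardDiff h v m)
  unfold threeLevelEnergy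
  linarith

theorem threeLevelEnergy_one_le_of_init {Ci : H →ₗ[ℝ] H} (hB : B.IsSymmetric)
    (hA : A.IsSymmetric) (hh : h ≠ 0)
    (hCi : Function.RightInverse Ci (B + (σ * h^2) • A : H →ₗ[ℝ] H)) (hCipos : Ci.IsPositive)
    {u₁ f₀ : H}
    (hinit : B (h⁻¹ • (v 1 - v 0)) + (σ * h^2) • A (h⁻¹ • (v 1 - v 0)) + ((1/2) * h) • A (v 0)
      = u₁ + ((1/2) * h) • f₀) :
    threeLevelEnergy B A σ h v 1
      ≤ ⟪A (v 0), v 0⟫ + ⟪Ci (u₁ + ((1/2) * h) • f₀), u₁ + ((1/2) * h) • f₀⟫ := by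
  set C := B + (σ * h^2) • A
  have hC : C.IsSymmetric := hB.add (hA.smul (by simp))
  set w := h⁻¹ • (v 1 - v 0)
  set p := u₁ + ((1/2) * h) • f₀
  set q := ((1/2) * h) • A (v 0)
  have hCw : C w = p - q := by
    rw [← hinit]
    simp only [C, LinearMap.add_apply, LinearMap.smul_apply, q]
    abel
  have hEw : threeLevelEnergy B A σ h v 1 = ⟪A (v 0), v 0⟫ + ⟪C w + (2:ℝ) • q, w⟫ := by
    have hA' : ⟪v 0, A (v 1)⟫ = ⟪v 1, A (v 0)⟫ := by rw [← hA, real_inner_comm]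
    simp only [threeLevelEnergy, backwardDiff, levelMean, Nat.sub_self, C, w, q,
      LinearMap.add_apply, LinearMap.smul_apply, map_add, map_sub, map_smul, inner_add_left,
      inner_add_right, inner_sub_left, inner_sub_right, real_inner_smul_left,
      real_inner_smul_right, real_inner_comm _ (A _), real_inner_comm _ (B _)]
    rw [hA']
    field_simp
    ring
  have hpq : ⟪C w + (2:ℝ) • q, w⟫ = ⟪Ci p, p⟫ - ⟪Ci q, q⟫ := by
    calc ⟪C w + (2:ℝ) • q, w⟫ = ⟪C (Ci (p + q)), w⟫ := by rw [hCi, hCw]; congr 1; module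
      _ = ⟪Ci (p + q), p - q⟫ := by rw [hC, hCw]
      _ = ⟪Ci p, p⟫ - ⟪Ci q, q⟫ := by
        rw [map_add, inner_add_left, inner_sub_right, inner_sub_right,
          hCipos.isSymmetric q p, real_inner_comm (Ci p) q]
        ring
  rw [hEw, hpq]
  linarith [hCipos.inner_nonneg_left q]

end ThreeLevel

section ThreeLevelStability

variable {B A Ai Ci : H →ₗ[ℝ] H} {σ h : ℝ} {v f : ℕ → H}

theorem mul_inner_le_inner_add_smul (hBA : ∀ w, (1/4 - σ) * h^2 * ⟪A w, w⟫ ≤ ⟪B w, w⟫) (y : H) :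
    h^2 / 4 * ⟪A y, y⟫ ≤ ⟪(B + (σ * h^2) • A) y, y⟫ := by
  rw [LinearMap.add_apply, LinearMap.smul_apply, inner_add_left, real_inner_smul_left]
  linarith [hBA y]

theorem isPositive_add_smul (hB : B.IsSymmetric) (hA : A.IsPositive)
    (hBA : ∀ w, (1/4 - σ) * h^2 * ⟪A w, w⟫ ≤ ⟪B w, w⟫) :
    (B + (σ * h^2) • A).IsPositive :=
  (LinearMap.isPositive_iff _).mpr ⟨hB.add (hA.isSymmetric.smul (by simp)), fun y =>
    (mul_nonneg (by positivity) (hA.inner_nonneg_left y)).trans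
      (mul_inner_le_inner_add_smul hBA y)⟩

theorem threeLevelEnergy_one_le (hB : B.IsSymmetric) (hA : A.IsPositive)
    (hAi : Function.RightInverse Ai A)
    (hCi : Function.RightInverse Ci (B + (σ * h^2) • A : H →ₗ[ℝ] H)) (hh : h ≠ 0)
    (hBA : ∀ w, (1/4 - σ) * h^2 * ⟪A w, w⟫ ≤ ⟪B w, w⟫) {u₁ : H}
    (hinit : B (h⁻¹ • (v 1 - v 0)) + (σ * h^2) • A (h⁻¹ • (v 1 - v 0)) + ((1/2) * h) • A (v 0)
      = u₁ + ((1/2) * h) • f 0) :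
    threeLevelEnergy B A σ h v 1
      ≤ (√(⟪A (v 0), v 0⟫ + ⟪Ci u₁, u₁⟫) + √⟪Ai (f 0), f 0⟫) ^ 2 := by
  have hCipos := (isPositive_add_smul hB hA hBA).of_rightInverse hCi
  set q := ((1/2) * h) • f 0
  have hq : √⟪Ci q, q⟫ ≤ √⟪Ai (f 0), f 0⟫ := by
    refine Real.sqrt_le_sqrt ?_
    have := hA.mul_inner_le_of_rightInverse hAi hCi (by positivity)
      (mul_inner_le_inner_add_smul hBA) (f 0)
    simp only [q, map_smul, real_inner_smul_left, real_inner_smul_right]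
    linarith
  have hp : √⟪Ci (u₁ + q), u₁ + q⟫ ≤ √⟪Ci u₁, u₁⟫ + √⟪Ai (f 0), f 0⟫ :=
    (hCipos.sqrt_inner_add_le u₁ q).trans (by linarith)
  have hp2 := pow_le_pow_left₀ (Real.sqrt_nonneg _) hp 2
  rw [Real.sq_sqrt (hCipos.inner_nonneg_left _)] at hp2
  have hu : √⟪Ci u₁, u₁⟫ ≤ √(⟪A (v 0), v 0⟫ + ⟪Ci u₁, u₁⟫) :=
    Real.sqrt_le_sqrt (by linarith [hA.inner_nonneg_left (v 0)])
  have hR := Real.sq_sqrt (add_nonneg (hA.inner_nonneg_left (v 0)) (hCipos.inner_nonneg_left u₁))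
  have hc := Real.sq_sqrt (hCipos.inner_nonneg_left u₁)
  have hk := Real.sqrt_nonneg ⟪Ai (f 0), f 0⟫
  nlinarith [threeLevelEnergy_one_le_of_init hB hA.isSymmetric hh hCi hCipos hinit]

theorem threeLevelEnergy_le_of_operator_eq (hB : B.IsSymmetric) (hA : A.IsPositive)
    (hAi : Function.RightInverse Ai A) (hh : 0 < h)
    (hBA : ∀ w, (1/4 - σ) * h^2 * ⟪A w, w⟫ ≤ ⟪B w, w⟫) {M : ℕ}
    (heq : ∀ m, 1 ≤ m → m ≤ M - 1 → threeLevelOperator B A σ h v m = f m) {K : ℝ}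
    (hK : ∀ j < M, √⟪Ai (f j), f j⟫ ≤ K) {m : ℕ} (hm : 2 ≤ m) (hmM : m ≤ M) :
    threeLevelEnergy B A σ h v m ≤ threeLevelEnergy B A σ h v 1
      + 2 * K * (√(threeLevelEnergy B A σ h v m) + √(threeLevelEnergy B A σ h v 1))
      + 2 * ∑ l ∈ Ioo 1 m, h * √⟪Ai (backwardDiff h f l), backwardDiff h f l⟫
          * √(threeLevelEnergy B A σ h v l) := by
  have hbound := fun x l => abs_inner_levelMean_le (v := v) hA hAi hBA x l
  have hparts := eq_add_sub_sum_inner_of_sub_eq (E := threeLevelEnergy B A σ h v) (f := f)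
    (s := levelMean v) hm fun l hl hlm => by
    rw [threeLevelEnergy_succ_sub hB hA.isSymmetric hh.ne', heq l hl (by omega)]
  have hlast := (le_abs_self _).trans (hbound (f (m - 1)) m)
  have hfirst := (neg_le_abs _).trans (hbound (f 1) 1)
  have hsum : -∑ l ∈ Ioo 1 m, ⟪f l - f (l - 1), levelMean v l⟫ ≤ ∑ l ∈ Ioo 1 m,
      h * √⟪Ai (backwardDiff h f l), backwardDiff h f l⟫ * √(threeLevelEnergy B A σ h v l) := by
    rw [← sum_neg_distrib]
    refine sum_le_sum fun l _ => (neg_le_abs _).trans ?_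
    have hdiff : f l - f (l - 1) = h • backwardDiff h f l := by
      rw [backwardDiff, smul_smul, mul_inv_cancel₀ hh.ne', one_smul]
    rw [hdiff, real_inner_smul_left, abs_mul, abs_of_pos hh, mul_assoc]
    exact mul_le_mul_of_nonneg_left (hbound _ l) hh.le
  have hK₁ := mul_le_mul_of_nonneg_right (hK (m - 1) (by omega))
    (Real.sqrt_nonneg (threeLevelEnergy B A σ h v m))
  have hK₂ := mul_le_mul_of_nonneg_right (hK 1 (by omega))
    (Real.sqrt_nonneg (threeLevelEnergy B A σ h v 1))
  linarith

theorem sqrt_threeLevelEnergy_le (hB : B.IsSymmetric) (hA : A.IsPositive)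
    (hAi : Function.RightInverse Ai A)
    (hCi : Function.RightInverse Ci (B + (σ * h^2) • A : H →ₗ[ℝ] H)) (hh : 0 < h)
    (hBA : ∀ w, (1/4 - σ) * h^2 * ⟪A w, w⟫ ≤ ⟪B w, w⟫) {M : ℕ} {u₁ : H}
    (heq : ∀ m, 1 ≤ m → m ≤ M - 1 → threeLevelOperator B A σ h v m = f m)
    (hinit : B (h⁻¹ • (v 1 - v 0)) + (σ * h^2) • A (h⁻¹ • (v 1 - v 0)) + ((1/2) * h) • A (v 0)
      = u₁ + ((1/2) * h) • f 0)
    {K : ℝ} (hK : ∀ j < M, √⟪Ai (f j), f j⟫ ≤ K) {m : ℕ} (hm : 1 ≤ m) (hmM : m ≤ M) :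
    √(threeLevelEnergy B A σ h v m) ≤ √(⟪A (v 0), v 0⟫ + ⟪Ci u₁, u₁⟫)
      + 2 * h * ∑ l ∈ Ioo 1 m, √⟪Ai (backwardDiff h f l), backwardDiff h f l⟫ + 3 * K := by
  set R := √(⟪A (v 0), v 0⟫ + ⟪Ci u₁, u₁⟫)
  set x := fun l => √(threeLevelEnergy B A σ h v l)
  have hx2 : ∀ l, x l ^ 2 = threeLevelEnergy B A σ h v l :=
    fun l => Real.sq_sqrt (threeLevelEnergy_nonneg hA hBA l)
  have hK0 : 0 ≤ K := (Real.sqrt_nonneg _).trans (hK 0 (by omega))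
  have hR : 0 ≤ R := Real.sqrt_nonneg _
  have hx1 : x 1 ≤ R + K := by
    have h1 := Real.sqrt_le_sqrt (threeLevelEnergy_one_le hB hA hAi hCi hh.ne' hBA hinit)
    rw [Real.sqrt_sq (by positivity)] at h1
    linarith [hK 0 (by omega)]
  have hgronwall := le_add_add_two_mul_sum_of_sq_le (x := x) (a := R + 2 * K) (b := K)
    (g := fun l => h * √⟪Ai (backwardDiff h f l), backwardDiff h f l⟫) (N := M)
    (by positivity) (by linarith) (fun l => by positivity) (fun k hk hkM => by
      rcases hk.eq_or_lt with rfl | hk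
      · rw [Ioo_self, sum_empty]
        nlinarith [Real.sqrt_nonneg (threeLevelEnergy B A σ h v 1)]
      · have := threeLevelEnergy_le_of_operator_eq hB hA hAi hh hBA heq hK hk hkM
        nlinarith [hx2 1, hx2 k, Real.sqrt_nonneg (threeLevelEnergy B A σ h v 1)]) m hm hmM
  rw [mul_assoc, mul_sum]
  linarith

end ThreeLevelStability

end

theorem stmt_3
    {H : Type*} [NormedAddCommGroup H] [InnerProductSpace ℝ H]
    (B A Ai Ci : H →ₗ[ℝ] H)
    (hBsym : ∀ x y : H, ⟪B x, y⟫ = ⟪x, B y⟫)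
    (hBpos : ∀ x : H, x ≠ 0 → 0 < ⟪B x, x⟫)
    (hAsym : ∀ x y : H, ⟪A x, y⟫ = ⟪x, A y⟫)
    (hApos : ∀ x : H, x ≠ 0 → 0 < ⟪A x, x⟫)
    (hAi : ∀ x : H, A (Ai x) = x)
    (T : ℝ) (hT : 0 < T) (M : ℕ) (hM : 2 ≤ M) (ht : ℝ) (hht : ht = T / M)
    (σ : ℝ) (hσ : σ < 1/4)
    (hCi : ∀ x : H, B (Ci x) + (σ * ht^2) • A (Ci x) = x)
    (α : ℝ)
    (hAB : ∀ w : H, ⟪A w, w⟫ ≤ α^2 * ⟪B w, w⟫)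
    (hstab : (1/4 - σ) * ht^2 * α^2 ≤ 1)
    (v : ℕ → H) (u₁ : H) (f : ℕ → H)
    (heq : ∀ m : ℕ, 1 ≤ m → m ≤ M - 1 →
      B ((ht^2)⁻¹ • (v (m+1) - (2:ℝ) • v m + v (m-1)))
        + (σ * ht^2) • A ((ht^2)⁻¹ • (v (m+1) - (2:ℝ) • v m + v (m-1)))
        + A (v m) = f m)
    (hinit : B (ht⁻¹ • (v 1 - v 0)) + (σ * ht^2) • A (ht⁻¹ • (v 1 - v 0))
        + ((1/2) * ht) • A (v 0) = u₁ + ((1/2) * ht) • f 0) :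
    ∀ m : ℕ, 1 ≤ m → m ≤ M →
      Real.sqrt (⟪B (ht⁻¹ • (v m - v (m-1))), ht⁻¹ • (v m - v (m-1))⟫
          + (σ - 1/4) * ht^2 * ⟪A (ht⁻¹ • (v m - v (m-1))), ht⁻¹ • (v m - v (m-1))⟫
          + ⟪A ((1/2 : ℝ) • (v (m-1) + v m)), (1/2 : ℝ) • (v (m-1) + v m)⟫)
      ≤ Real.sqrt (⟪A (v 0), v 0⟫ + ⟪Ci u₁, u₁⟫)
        + 2 * ht * ∑ l ∈ Finset.Icc 1 (M-1),
            Real.sqrt ⟪Ai (ht⁻¹ • (f l - f (l-1))), ht⁻¹ • (f l - f (l-1))⟫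
        + 3 * (Finset.range M).sup' (Finset.nonempty_range_iff.mpr (by omega))
            (fun m => Real.sqrt ⟪Ai (f m), f m⟫) := by
  have hht0 : 0 < ht := hht ▸ div_pos hT (by positivity)
  have hA := LinearMap.isPositive_of_inner_pos hAsym hApos
  have hB := LinearMap.isPositive_of_inner_pos hBsym hBpos
  have hBA : ∀ w, (1/4 - σ) * ht^2 * ⟪A w, w⟫ ≤ ⟪B w, w⟫ := fun w => by
    have hσt : 0 ≤ (1/4 - σ) * ht^2 := by nlinarith
    nlinarith [mul_le_mul_of_nonneg_left (hAB w) hσt,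
      mul_le_mul_of_nonneg_right hstab (hB.inner_nonneg_left w)]
  have hK : ∀ j < M, √⟪Ai (f j), f j⟫ ≤ (range M).sup' (nonempty_range_iff.mpr (by omega))
      (fun m => √⟪Ai (f m), f m⟫) := fun j hj =>
    le_sup' (fun m => √⟪Ai (f m), f m⟫) (mem_range.mpr hj)
  intro m hm hmM
  refine (sqrt_threeLevelEnergy_le hBsym hA hAi hCi hht0 hBA heq hinit hK hm hmM).trans ?_
  gcongr
  exact sum_le_sum_of_subset_of_nonneg (fun l hl => by simp only [mem_Ioo, mem_Icc] at hl ⊢; omega)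
    fun _ _ _ => Real.sqrt_nonneg _
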